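/- Let (a_N)_{N ≥ 1} be a sequence with a_N ∈ ℝ^{N+1} such that sup_N ‖a_N‖_∞ < ∞, ‖F_N(a_N)‖_∞ → 0 as N → ∞, and suppose there are C > 0 and N₂ ≥ 1 such that for all N ≥ N₂ the Jacobian matrix DF_N(a_N) is invertible with operator norm ‖DF_N(a_N)^{−1}‖ ≤ C (operator norm induced by the ∞-norm on ℝ^{N+1}). Then there exists N₀ ≥ 1 such that for every N ≥ N₀ there is a vector a*_N ∈ ℝ^{N+1} with F_N(a*_N) = 0 and DF_N(a*_N) invertible, and moreover ‖a*_N − a_N‖_∞ → 0 as N → ∞. -/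

import Mathlib

/-!
`F_N(x) = x - B_N(x, x)` with `B_N` bilinear of norm at most `2` in the maximum norm, so `DF_N`
is `4`-Lipschitz. Hence on the ball of radius `r = 2C‖F_N(a_N)‖` around `a_N`, `F_N` differs
from its linearisation `DF_N(a_N)` by a map of Lipschitz constant `4r`; once
`16 C² ‖F_N(a_N)‖ ≤ 1`, the surjectivity theorem for maps close to an invertible linear map puts `0`
in the image of that ball, and a Neumann series keeps the Jacobian invertible there.
So `a*_N` exists with `‖a*_N - a_N‖ ≤ 2C‖F_N(a_N)‖ → 0`.
-/

/-- The rescaled matching map `F_N : ℝ^{N+1} → ℝ^{N+1}`,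
`F_N(a)_n = a_n − (2/(N+1))·∑_{j=1}^{N−n} a_j·a_{n+j} − (1/(N+1))·∑_{j=0}^{n} a_j·a_{n−j}`,
realised on `Fin (N+1) → ℝ` (whose norm is the maximum norm). -/
noncomputable def FNfin (N : ℕ) (a : Fin (N + 1) → ℝ) : Fin (N + 1) → ℝ :=
  fun n =>
    let b : ℕ → ℝ := fun k => if h : k < N + 1 then a ⟨k, h⟩ else 0
    b n - (2 / ((N : ℝ) + 1)) * ∑ j ∈ Finset.Icc 1 (N - (n : ℕ)), b j * b ((n : ℕ) + j)
        - (1 / ((N : ℝ) + 1)) * ∑ j ∈ Finset.range ((n : ℕ) + 1), b j * b ((n : ℕ) - j)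

open Filter Metric

section Newton

variable {E F : Type*} [NormedAddCommGroup E] [NormedSpace ℝ E] [NormedAddCommGroup F]
  [NormedSpace ℝ F]

theorem ContinuousLinearEquiv.isInvertible_of_norm_symm_mul_norm_sub_lt [CompleteSpace E]
    (J : E ≃L[ℝ] F) (A : E →L[ℝ] F) (h : ‖(J.symm : F →L[ℝ] E)‖ * ‖A - J‖ < 1) :
    A.IsInvertible := by
  set T : E →L[ℝ] E := (J.symm : F →L[ℝ] E) ∘L ((J : E →L[ℝ] F) - A)
  have hT : ‖T‖ < 1 := by
    calc ‖T‖ ≤ ‖(J.symm : F →L[ℝ] E)‖ * ‖(J : E →L[ℝ] F) - A‖ :=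
          ContinuousLinearMap.opNorm_comp_le _ _
      _ < 1 := by rwa [norm_sub_rev]
  have hA : A = (J : E →L[ℝ] F) ∘L (1 - T) := by
    ext v
    simp [T]
  rw [hA]
  exact ContinuousLinearMap.IsInvertible.comp ⟨J, rfl⟩ ⟨.ofUnit (Units.oneSub T hT), rfl⟩

theorem approximatesLinearOn_closedBall_of_norm_fderiv_sub_le {f : E → F}
    (hf : Differentiable ℝ f) {x : E} {K : ℝ} (hK0 : 0 ≤ K)
    (hK : ∀ z, ‖fderiv ℝ f z - fderiv ℝ f x‖ ≤ K * ‖z - x‖) (r : ℝ) :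
    ApproximatesLinearOn f (fderiv ℝ f x) (closedBall x r) (K * r).toNNReal := by
  intro p hp q hq
  have hbound : ∀ z ∈ closedBall x r, ‖fderiv ℝ f z - fderiv ℝ f x‖ ≤ K * r := fun z hz =>
    (hK z).trans (mul_le_mul_of_nonneg_left (mem_closedBall_iff_norm.mp hz) hK0)
  calc ‖f p - f q - fderiv ℝ f x (p - q)‖ ≤ K * r * ‖p - q‖ :=
        (convex_closedBall x r).norm_image_sub_le_of_norm_fderiv_le' (fun z _ => hf z) hbound hq hp
    _ ≤ (K * r).toNNReal * ‖p - q‖ := by gcongr; exact Real.le_coe_toNNReal _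

theorem exists_zero_near_of_norm_fderiv_sub_le [CompleteSpace E] [Nontrivial E] {f : E → F}
    (hf : Differentiable ℝ f) {x : E} {K C : ℝ} (hK0 : 0 ≤ K)
    (hK : ∀ z, ‖fderiv ℝ f z - fderiv ℝ f x‖ ≤ K * ‖z - x‖) (J : E ≃L[ℝ] F)
    (hJ : (J : E →L[ℝ] F) = fderiv ℝ f x) (hJC : ‖(J.symm : F →L[ℝ] E)‖ ≤ C)
    (hsmall : 4 * K * C ^ 2 * ‖f x‖ ≤ 1) :
    ∃ y, f y = 0 ∧ (fderiv ℝ f y).IsInvertible ∧ ‖y - x‖ ≤ 2 * C * ‖f x‖ := by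
  set ε := ‖f x‖
  set r := 2 * C * ε
  have hε : 0 ≤ ε := norm_nonneg _
  have hs : 0 < ‖(J.symm : F →L[ℝ] E)‖ := J.norm_symm_pos
  have hC : 0 < C := hs.trans_le hJC
  have hr : 0 ≤ r := by positivity
  have happrox := approximatesLinearOn_closedBall_of_norm_fderiv_sub_le hf hK0 hK r
  rw [← hJ] at happrox
  have hsurj := happrox.surjOn_closedBall_of_nonlinearRightInverse J.toNonlinearRightInverse hr
    subset_rfl
  -- with `r = 2Cε` the image ball has radius `(‖J⁻¹‖⁻¹ - Kr) r ≥ 2ε - 4KC²ε² ≥ ε`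
  have hmem : (0 : F) ∈ closedBall (f x)
      (((J.toNonlinearRightInverse.nnnorm : ℝ)⁻¹ - (K * r).toNNReal) * r) := by
    rw [mem_closedBall, dist_zero_left, Real.coe_toNNReal _ (by positivity)]
    have hinv : C⁻¹ ≤ (J.toNonlinearRightInverse.nnnorm : ℝ)⁻¹ := inv_anti₀ hs hJC
    calc ε ≤ (C⁻¹ - K * r) * r := by
          have hCC : C⁻¹ * C = 1 := inv_mul_cancel₀ hC.ne'
          have : 0 ≤ ε * (1 - 4 * K * C ^ 2 * ε) := mul_nonneg hε (by linarith)
          nlinarith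
      _ ≤ _ := by gcongr
  obtain ⟨y, hy, hfy⟩ := hsurj hmem
  refine ⟨y, hfy, J.isInvertible_of_norm_symm_mul_norm_sub_lt _ ?_, mem_closedBall_iff_norm.mp hy⟩
  rw [hJ]
  calc ‖(J.symm : F →L[ℝ] E)‖ * ‖fderiv ℝ f y - fderiv ℝ f x‖ ≤ C * (K * r) := by
        gcongr
        exact (hK y).trans (by gcongr; exact mem_closedBall_iff_norm.mp hy)
    _ < 1 := by nlinarith

end Newton

section Quadratic

variable {E : Type*} [NormedAddCommGroup E] [NormedSpace ℝ E] (B : E →L[ℝ] E →L[ℝ] E)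

theorem hasFDerivAt_id_sub_bilinear_diag (x : E) :
    HasFDerivAt (fun y => y - B y y)
      (.id ℝ E - (B.precompR E x (.id ℝ E) + B.precompL E (.id ℝ E) x)) x :=
  (hasFDerivAt_id x).sub (B.hasFDerivAt_of_bilinear (hasFDerivAt_id x) (hasFDerivAt_id x))

theorem norm_fderiv_id_sub_bilinear_diag_sub_le (x z : E) :
    ‖fderiv ℝ (fun y => y - B y y) z - fderiv ℝ (fun y => y - B y y) x‖ ≤
      2 * ‖B‖ * ‖z - x‖ := by
  rw [(hasFDerivAt_id_sub_bilinear_diag B z).fderiv, (hasFDerivAt_id_sub_bilinear_diag B x).fderiv]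
  refine ContinuousLinearMap.opNorm_le_bound _ (by positivity) fun h => ?_
  have hdiff : (.id ℝ E - (B.precompR E z (.id ℝ E) + B.precompL E (.id ℝ E) z) -
      (.id ℝ E - (B.precompR E x (.id ℝ E) + B.precompL E (.id ℝ E) x))) h =
      -(B (z - x) h + B h (z - x)) := by
    simp only [sub_apply, add_apply, ContinuousLinearMap.precompR_apply,
      ContinuousLinearMap.precompL_apply, ContinuousLinearMap.compL_apply,
      ContinuousLinearMap.comp_id, ContinuousLinearMap.id_apply, map_sub]
    abel
  rw [hdiff, norm_neg]
  calc ‖B (z - x) h + B h (z - x)‖ ≤ ‖B‖ * ‖z - x‖ * ‖h‖ + ‖B‖ * ‖h‖ * ‖z - x‖ :=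
        norm_add_le_of_le (B.le_opNorm₂ _ _) (B.le_opNorm₂ _ _)
    _ = 2 * ‖B‖ * ‖z - x‖ * ‖h‖ := by ring

end Quadratic

namespace FNfin

variable (N : ℕ)

noncomputable def zeroExtend : (Fin (N + 1) → ℝ) →ₗ[ℝ] ℕ → ℝ where
  toFun x k := if h : k < N + 1 then x ⟨k, h⟩ else 0
  map_add' x y := by ext k; dsimp only [Pi.add_apply]; split_ifs <;> simp
  map_smul' c x := by ext k; dsimp only [Pi.smul_apply]; split_ifs <;> simp

theorem abs_zeroExtend_le (x : Fin (N + 1) → ℝ) (k : ℕ) : |zeroExtend N x k| ≤ ‖x‖ := by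
  by_cases h : k < N + 1
  · simpa only [zeroExtend, LinearMap.coe_mk, AddHom.coe_mk, dif_pos h, Real.norm_eq_abs]
      using norm_le_pi_norm x ⟨k, h⟩
  · simp only [zeroExtend, LinearMap.coe_mk, AddHom.coe_mk, dif_neg h, abs_zero, norm_nonneg]

theorem abs_sum_zeroExtend_mul_le (x y : Fin (N + 1) → ℝ) (S : Finset ℕ) (g : ℕ → ℕ) :
    |∑ j ∈ S, zeroExtend N x j * zeroExtend N y (g j)| ≤ S.card * (‖x‖ * ‖y‖) := by
  calc |∑ j ∈ S, zeroExtend N x j * zeroExtend N y (g j)|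
      ≤ ∑ j ∈ S, |zeroExtend N x j| * |zeroExtend N y (g j)| := by
        simpa only [abs_mul] using
          Finset.abs_sum_le_sum_abs (fun j => zeroExtend N x j * zeroExtend N y (g j)) S
    _ ≤ ∑ _j ∈ S, ‖x‖ * ‖y‖ := by
        gcongr with j
        · exact abs_zeroExtend_le N x j
        · exact abs_zeroExtend_le N y (g j)
    _ = S.card * (‖x‖ * ‖y‖) := by rw [Finset.sum_const, nsmul_eq_mul]

noncomputable def bilin : (Fin (N + 1) → ℝ) →ₗ[ℝ] (Fin (N + 1) → ℝ) →ₗ[ℝ] Fin (N + 1) → ℝ :=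
  LinearMap.mk₂ ℝ
    (fun x y n =>
      (2 / ((N : ℝ) + 1)) * ∑ j ∈ Finset.Icc 1 (N - n), zeroExtend N x j * zeroExtend N y (n + j)
        + (1 / ((N : ℝ) + 1)) *
          ∑ j ∈ Finset.range (n + 1), zeroExtend N x j * zeroExtend N y (n - j))
    (fun x x' y => by
      ext n; simp only [map_add, Pi.add_apply, add_mul, Finset.sum_add_distrib]; ring)
    (fun c x y => by
      ext n; simp only [map_smul, Pi.smul_apply, smul_eq_mul, mul_assoc, ← Finset.mul_sum]; ring)
    (fun x y y' => by
      ext n; simp only [map_add, Pi.add_apply, mul_add, Finset.sum_add_distrib]; ring)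
    (fun c x y => by
      ext n
      simp only [map_smul, Pi.smul_apply, smul_eq_mul, mul_left_comm _ c, ← Finset.mul_sum]
      ring)

theorem bilin_apply (x y : Fin (N + 1) → ℝ) (n : Fin (N + 1)) :
    bilin N x y n =
      (2 / ((N : ℝ) + 1)) * ∑ j ∈ Finset.Icc 1 (N - n), zeroExtend N x j * zeroExtend N y (n + j)
        + (1 / ((N : ℝ) + 1)) *
          ∑ j ∈ Finset.range (n + 1), zeroExtend N x j * zeroExtend N y (n - j) :=
  rfl

theorem norm_bilin_le (x y : Fin (N + 1) → ℝ) : ‖bilin N x y‖ ≤ 2 * ‖x‖ * ‖y‖ := by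
  refine (pi_norm_le_iff_of_nonneg (by positivity)).mpr fun n => ?_
  obtain ⟨m, hm⟩ := n
  have hmN : (m : ℝ) ≤ N := by exact_mod_cast Nat.lt_succ_iff.mp hm
  have h1 := abs_sum_zeroExtend_mul_le N x y (Finset.Icc 1 (N - m)) (m + ·)
  have h2 := abs_sum_zeroExtend_mul_le N x y (Finset.range (m + 1)) (m - ·)
  rw [Nat.card_Icc, add_tsub_cancel_right, Nat.cast_sub (by omega)] at h1
  rw [Finset.card_range, Nat.cast_succ] at h2
  have hP : 0 ≤ ‖x‖ * ‖y‖ := by positivity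
  rw [Real.norm_eq_abs, bilin_apply, Fin.val_mk]
  calc _ ≤ (2 / ((N : ℝ) + 1)) * (((N : ℝ) - m) * (‖x‖ * ‖y‖))
        + (1 / ((N : ℝ) + 1)) * (((m : ℝ) + 1) * (‖x‖ * ‖y‖)) := by
        refine (abs_add_le _ _).trans ?_
        rw [abs_mul, abs_mul, abs_of_pos (a := 2 / ((N : ℝ) + 1)) (by positivity),
          abs_of_pos (a := 1 / ((N : ℝ) + 1)) (by positivity)]
        gcongr
    _ = (2 * N - m + 1) / ((N : ℝ) + 1) * (‖x‖ * ‖y‖) := by field_simp; ring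
    _ ≤ 2 * ‖x‖ * ‖y‖ := by
        rw [mul_assoc]
        gcongr
        rw [div_le_iff₀ (by positivity)]
        linarith [(Nat.cast_nonneg m : (0 : ℝ) ≤ m)]

noncomputable def bilinCLM : (Fin (N + 1) → ℝ) →L[ℝ] (Fin (N + 1) → ℝ) →L[ℝ] Fin (N + 1) → ℝ :=
  (bilin N).mkContinuous₂ 2 (norm_bilin_le N)

theorem norm_bilinCLM_le : ‖bilinCLM N‖ ≤ 2 :=
  LinearMap.mkContinuous₂_norm_le _ zero_le_two _

theorem eq_sub_bilinCLM_diag : FNfin N = fun x => x - bilinCLM N x x := by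
  ext x n
  simp only [FNfin, bilinCLM, LinearMap.mkContinuous₂_apply, bilin_apply, Pi.sub_apply]
  rw [sub_sub, dif_pos n.isLt]
  rfl

theorem differentiable : Differentiable ℝ (FNfin N) := by
  rw [eq_sub_bilinCLM_diag]
  exact fun x => (hasFDerivAt_id_sub_bilinear_diag _ x).differentiableAt

theorem norm_fderiv_sub_le (x z : Fin (N + 1) → ℝ) :
    ‖fderiv ℝ (FNfin N) z - fderiv ℝ (FNfin N) x‖ ≤ 4 * ‖z - x‖ := by
  rw [eq_sub_bilinCLM_diag]
  calc _ ≤ 2 * ‖bilinCLM N‖ * ‖z - x‖ := norm_fderiv_id_sub_bilinear_diag_sub_le _ x z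
    _ ≤ 2 * 2 * ‖z - x‖ := by gcongr; exact norm_bilinCLM_le N
    _ = 4 * ‖z - x‖ := by norm_num

end FNfin

theorem FN_roots_near_approximation_general
    (a : ∀ N : ℕ, Fin (N + 1) → ℝ)
    (hFto0 : Filter.Tendsto (fun N => ‖FNfin N (a N)‖) Filter.atTop (nhds 0))
    (hjac : ∃ C : ℝ, 0 < C ∧ ∃ N₂ : ℕ, 1 ≤ N₂ ∧ ∀ N, N₂ ≤ N →
      ∃ J : (Fin (N + 1) → ℝ) ≃L[ℝ] (Fin (N + 1) → ℝ),
        (J : (Fin (N + 1) → ℝ) →L[ℝ] (Fin (N + 1) → ℝ)) = fderiv ℝ (FNfin N) (a N) ∧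
        ‖(J.symm : (Fin (N + 1) → ℝ) →L[ℝ] (Fin (N + 1) → ℝ))‖ ≤ C) :
    ∃ N₀ : ℕ, 1 ≤ N₀ ∧ ∃ astar : ∀ N : ℕ, Fin (N + 1) → ℝ,
      (∀ N, N₀ ≤ N → FNfin N (astar N) = 0 ∧
        ∃ J : (Fin (N + 1) → ℝ) ≃L[ℝ] (Fin (N + 1) → ℝ),
          (J : (Fin (N + 1) → ℝ) →L[ℝ] (Fin (N + 1) → ℝ))
            = fderiv ℝ (FNfin N) (astar N)) ∧
      Filter.Tendsto (fun N => ‖astar N - a N‖) Filter.atTop (nhds 0) := by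
  obtain ⟨C, -, N₂, -, hJac⟩ := hjac
  have hsmall : ∀ᶠ N in atTop, 16 * C ^ 2 * ‖FNfin N (a N)‖ ≤ 1 := by
    have h := hFto0.const_mul (16 * C ^ 2)
    rw [mul_zero] at h
    exact h.eventually (eventually_le_nhds one_pos)
  have hroots : ∀ᶠ N in atTop, ∃ y, FNfin N y = 0 ∧ (fderiv ℝ (FNfin N) y).IsInvertible ∧
      ‖y - a N‖ ≤ 2 * C * ‖FNfin N (a N)‖ := by
    filter_upwards [hsmall, eventually_ge_atTop N₂] with N hN hN₂
    obtain ⟨J, hJ, hJC⟩ := hJac N hN₂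
    refine exists_zero_near_of_norm_fderiv_sub_le (FNfin.differentiable N) zero_le_four
      (FNfin.norm_fderiv_sub_le N (a N)) J hJ hJC ?_
    linarith
  obtain ⟨N₀, hN₀⟩ := eventually_atTop.mp (hroots.and (eventually_ge_atTop 1))
  choose! astar hastar using fun N hN => (hN₀ N hN).1
  refine ⟨N₀, (hN₀ N₀ le_rfl).2, astar, fun N hN => ⟨(hastar N hN).1, (hastar N hN).2.1⟩, ?_⟩
  refine squeeze_zero' (.of_forall fun N => norm_nonneg _)
    (eventually_atTop.mpr ⟨N₀, fun N hN => (hastar N hN).2.2⟩) ?_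
  simpa using hFto0.const_mul (2 * C)

/-- if `(a_N)` is bounded in the maximum norm, `‖F_N(a_N)‖_∞ → 0`, and the
Jacobians `DF_N(a_N)` are eventually invertible with uniformly bounded inverses, then
for all large `N` there are genuine nondegenerate roots `a*_N` of `F_N` with
`‖a*_N − a_N‖_∞ → 0`. -/
theorem FN_roots_near_approximation
    (a : ∀ N : ℕ, Fin (N + 1) → ℝ)
    (hbdd : ∃ M : ℝ, ∀ N : ℕ, 1 ≤ N → ‖a N‖ ≤ M)
    (hFto0 : Filter.Tendsto (fun N => ‖FNfin N (a N)‖) Filter.atTop (nhds 0))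
    (hjac : ∃ C : ℝ, 0 < C ∧ ∃ N₂ : ℕ, 1 ≤ N₂ ∧ ∀ N, N₂ ≤ N →
      ∃ J : (Fin (N + 1) → ℝ) ≃L[ℝ] (Fin (N + 1) → ℝ),
        (J : (Fin (N + 1) → ℝ) →L[ℝ] (Fin (N + 1) → ℝ)) = fderiv ℝ (FNfin N) (a N) ∧
        ‖(J.symm : (Fin (N + 1) → ℝ) →L[ℝ] (Fin (N + 1) → ℝ))‖ ≤ C) :
    ∃ N₀ : ℕ, 1 ≤ N₀ ∧ ∃ astar : ∀ N : ℕ, Fin (N + 1) → ℝ,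
      (∀ N, N₀ ≤ N → FNfin N (astar N) = 0 ∧
        ∃ J : (Fin (N + 1) → ℝ) ≃L[ℝ] (Fin (N + 1) → ℝ),
          (J : (Fin (N + 1) → ℝ) →L[ℝ] (Fin (N + 1) → ℝ))
            = fderiv ℝ (FNfin N) (astar N)) ∧
      Filter.Tendsto (fun N => ‖astar N - a N‖) Filter.atTop (nhds 0) :=
  FN_roots_near_approximation_general a hFto0 hjac
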